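/- (Formality of morphisms of chain complexes over a field, used in the proof of Proposition 4.4) Let K be a field and f : C → D a morphism of chain complexes of K-vector spaces (ℤ-indexed, differentials of degree −1). Let H(C) and H(D) denote the chain complexes with zero differentials whose degree-n components are H_n(C) and H_n(D), and let H(f) : H(C) → H(D) be the morphism induced by f on homology. Then there exist chain maps p_C : C → H(C) and p_D : D → H(D), each a quasi-isomorphism inducing the identity map on homology, together with a chain homotopy between p_D∘f and H(f)∘p_C. In particular every morphism of chain complexes of K-vector spaces is formal, i.e. quasi-isomorphic to the induced morphism of homology complexes. -/

import Mathlib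

open CategoryTheory

/-- The chain complex with zero differentials whose degree-`n` component is `H_n(C)`. -/
noncomputable def homologyComplex {K : Type} [Field K] (C : ChainComplex (ModuleCat K) ℤ) :
    ChainComplex (ModuleCat K) ℤ where
  X n := C.homology n
  d _ _ := 0
  shape _ _ _ := rfl
  d_comp_d' := by intros; simp

/-- The morphism `H(f) : H(C) → H(D)` induced on homology by a chain map `f : C ⟶ D`. -/
noncomputable def homologyComplexMap {K : Type} [Field K]
    {C D : ChainComplex (ModuleCat K) ℤ} (f : C ⟶ D) :
    homologyComplex C ⟶ homologyComplex D where
  f n := HomologicalComplex.homologyMap f n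
  comm' := by intros; simp [homologyComplex]

/-- For a complex `W` with zero differentials, the canonical isomorphism `H_n(W) ≅ W_n`. -/
noncomputable def zeroDiffIso {K : Type} [Field K] (W : ChainComplex (ModuleCat K) ℤ)
    (hW : ∀ i j : ℤ, W.d i j = 0) (n : ℤ) :
    W.homology n ≅ W.X n :=
  (CategoryTheory.ShortComplex.HomologyData.ofZeros (W.sc n)
    (hW _ _) (hW _ _)).left.homologyIso

attribute [reducible] homologyComplex

section Aux

universe v

variable {K : Type} [Field K]

/-- Over a field, every linear map `d` admits a generalized inverse `σ` with `d ∘ σ ∘ d = d`. -/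
lemma exists_gen_inverse {V W : Type v} [AddCommGroup V] [Module K V]
    [AddCommGroup W] [Module K W] (d : V →ₗ[K] W) :
    ∃ σ : W →ₗ[K] V, ∀ x : V, d (σ (d x)) = d x := by
  obtain ⟨s, hs⟩ := (LinearMap.ker d).mkQ.exists_rightInverse_of_surjective
    (by rw [Submodule.range_mkQ])
  obtain ⟨q, hq⟩ := Submodule.exists_isCompl (LinearMap.range d)
  let r := (LinearMap.range d).linearProjOfIsCompl q hq
  refine ⟨s ∘ₗ (d.quotKerEquivRange.symm : LinearMap.range d →ₗ[K] V ⧸ LinearMap.ker d) ∘ₗ r,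
    fun x => ?_⟩
  have h1 : r (d x) = ⟨d x, LinearMap.mem_range_self d x⟩ :=
    Submodule.linearProjOfIsCompl_apply_left hq ⟨d x, LinearMap.mem_range_self d x⟩
  have h2 : d.quotKerEquivRange.symm ⟨d x, LinearMap.mem_range_self d x⟩ =
      Submodule.Quotient.mk x := by
    rw [LinearEquiv.symm_apply_eq]
    exact Subtype.ext (d.quotKerEquivRange_apply_mk x).symm
  simp only [LinearMap.comp_apply, LinearEquiv.coe_coe, h1, h2]
  have h3 : (LinearMap.ker d).mkQ (s (Submodule.Quotient.mk x)) =
      Submodule.Quotient.mk x := LinearMap.congr_fun hs _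
  have h4 : s (Submodule.Quotient.mk x) - x ∈ LinearMap.ker d :=
    (Submodule.Quotient.eq (LinearMap.ker d)).mp h3
  rw [LinearMap.mem_ker, map_sub, sub_eq_zero] at h4
  exact h4

/-- Over a field, the inclusion of cycles admits a retraction. -/
lemma exists_retraction (C : ChainComplex (ModuleCat.{v} K) ℤ) (n : ℤ) :
    ∃ r : C.X n ⟶ C.cycles n, C.iCycles n ≫ r = 𝟙 (C.cycles n) := by
  obtain ⟨r, hr⟩ := LinearMap.exists_leftInverse_of_injective (C.iCycles n).hom
    (by rw [LinearMap.ker_eq_bot]; exact (ModuleCat.mono_iff_injective _).1 inferInstance)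
  exact ⟨ModuleCat.ofHom r, ModuleCat.hom_ext hr⟩

lemma lemmaA (W : ChainComplex (ModuleCat.{v} K) ℤ)
    (hW : ∀ i j : ℤ, W.d i j = 0) (n : ℤ) :
    W.homologyπ n ≫ (zeroDiffIso W hW n).hom = W.iCycles n := by
  have := ((CategoryTheory.ShortComplex.HomologyData.ofZeros (W.sc n)
    (hW _ _) (hW _ _)).left).homologyπ_comp_homologyIso_hom
  rw [zeroDiffIso]
  refine this.trans ?_
  have h2 := ((CategoryTheory.ShortComplex.HomologyData.ofZeros (W.sc n)
    (hW _ _) (hW _ _)).left).cyclesIso_hom_comp_i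
  exact h2

/-- The projection chain map `C ⟶ H(C)` obtained from retractions onto the cycles. -/
noncomputable def proj (C : ChainComplex (ModuleCat.{v} K) ℤ)
    (r : ∀ n, C.X n ⟶ C.cycles n) (hr : ∀ n, C.iCycles n ≫ r n = 𝟙 (C.cycles n)) :
    C ⟶ homologyComplex C where
  f n := r n ≫ C.homologyπ n
  comm' i j _ := by
    dsimp only
    rw [Limits.comp_zero,
      ← HomologicalComplex.toCycles_i, Category.assoc,
      ← Category.assoc (C.iCycles j) (r j), hr j, Category.id_comp,
      HomologicalComplex.toCycles_comp_homologyπ]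

lemma proj_id (C : ChainComplex (ModuleCat.{v} K) ℤ)
    (r : ∀ n, C.X n ⟶ C.cycles n) (hr : ∀ n, C.iCycles n ≫ r n = 𝟙 (C.cycles n)) (n : ℤ) :
    HomologicalComplex.homologyMap (proj C r hr) n ≫
      (zeroDiffIso (homologyComplex C) (fun _ _ => rfl) n).hom = 𝟙 (C.homology n) := by
  rw [← cancel_epi (C.homologyπ n), ← Category.assoc,
    HomologicalComplex.homologyπ_naturality, Category.assoc,
    lemmaA (homologyComplex C) (fun _ _ => rfl) n,
    HomologicalComplex.cyclesMap_i, Category.comp_id]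
  show C.iCycles n ≫ r n ≫ C.homologyπ n = _
  rw [← Category.assoc, hr n, Category.id_comp]

lemma proj_qis (C : ChainComplex (ModuleCat.{v} K) ℤ)
    (r : ∀ n, C.X n ⟶ C.cycles n) (hr : ∀ n, C.iCycles n ≫ r n = 𝟙 (C.cycles n)) :
    QuasiIso (proj C r hr) := by
  constructor
  intro n
  rw [quasiIsoAt_iff_isIso_homologyMap]
  have h := proj_id C r hr n
  rw [Iso.comp_hom_eq_id] at h
  rw [h]
  infer_instance

lemma gvanish {C D : ChainComplex (ModuleCat.{v} K) ℤ} (f : C ⟶ D)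
    (rC : ∀ n, C.X n ⟶ C.cycles n) (hrC : ∀ n, C.iCycles n ≫ rC n = 𝟙 (C.cycles n))
    (rD : ∀ n, D.X n ⟶ D.cycles n) (hrD : ∀ n, D.iCycles n ≫ rD n = 𝟙 (D.cycles n))
    (i : ℤ) (z : C.X i) (hz : C.d i ((ComplexShape.down ℤ).next i) z = 0) :
    (proj D rD hrD).f i (f.f i z) = (homologyComplexMap f).f i ((proj C rC hrC).f i z) := by
  have hz' : (C.sc i).g z = 0 := hz
  set zc : C.cycles i := (C.sc i).moduleCatCyclesIso.inv ⟨z, hz'⟩ with hzc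
  have h1 : C.iCycles i zc = z := by
    have := ShortComplex.moduleCatCyclesIso_inv_iCycles_apply (C.sc i) ⟨z, hz'⟩
    exact this
  have h2 : f.f i z = D.iCycles i (HomologicalComplex.cyclesMap f i zc) := by
    rw [← h1]
    have := congrArg (fun (φ : C.cycles i ⟶ D.X i) => φ zc)
      (HomologicalComplex.cyclesMap_i f i)
    exact this.symm
  have h3 : rD i (f.f i z) = HomologicalComplex.cyclesMap f i zc := by
    rw [h2]
    exact congrArg (fun (φ : D.cycles i ⟶ D.cycles i) => φ (HomologicalComplex.cyclesMap f i zc))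
      (hrD i)
  have h4 : rC i z = zc := by
    rw [← h1]
    exact congrArg (fun (φ : C.cycles i ⟶ C.cycles i) => φ zc) (hrC i)
  show D.homologyπ i (rD i (f.f i z)) =
    HomologicalComplex.homologyMap f i (C.homologyπ i (rC i z))
  rw [h3, h4]
  exact (congrArg (fun (φ : C.cycles i ⟶ D.homology i) => φ zc)
    (HomologicalComplex.homologyπ_naturality f i)).symm

/-- The chain homotopy between `p_D ∘ f` and `H(f) ∘ p_C`. -/
noncomputable def theHomotopy {C D : ChainComplex (ModuleCat.{v} K) ℤ} (f : C ⟶ D)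
    (rC : ∀ n, C.X n ⟶ C.cycles n) (hrC : ∀ n, C.iCycles n ≫ rC n = 𝟙 (C.cycles n))
    (rD : ∀ n, D.X n ⟶ D.cycles n) (hrD : ∀ n, D.iCycles n ≫ rD n = 𝟙 (D.cycles n)) :
    Homotopy (f ≫ proj D rD hrD) (proj C rC hrC ≫ homologyComplexMap f) := by
  have hσ : ∀ i j : ℤ, ∃ σ : (C.X i ⟶ C.X j), ∀ x : C.X j,
      C.d j i (σ (C.d j i x)) = C.d j i x := fun i j => by
    obtain ⟨σ, h⟩ := exists_gen_inverse (C.d j i).hom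
    exact ⟨ModuleCat.ofHom σ, h⟩
  choose σ hσ using hσ
  set g : ∀ j : ℤ, C.X j ⟶ (homologyComplex D).X j :=
    fun j => f.f j ≫ (proj D rD hrD).f j -
      (proj C rC hrC).f j ≫ (homologyComplexMap f).f j with hg
  refine
    { hom := fun i j => if h : (ComplexShape.down ℤ).Rel j i then σ i j ≫ g j else 0
      zero := fun i j h => dif_neg h
      comm := fun i => ?_ }
  have hprev : prevD i (fun i j =>
      if h : (ComplexShape.down ℤ).Rel j i then σ i j ≫ g j else 0) = 0 := by
    show _ ≫ (homologyComplex D).d _ i = 0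
    rw [show (homologyComplex D).d ((ComplexShape.down ℤ).prev i) i = 0 from rfl,
      Limits.comp_zero]
  have hni : (ComplexShape.down ℤ).next i = i - 1 := ChainComplex.next ℤ i
  have hrel : (ComplexShape.down ℤ).Rel i ((ComplexShape.down ℤ).next i) := by
    rw [hni]; show i - 1 + 1 = i; omega
  have hdnext : dNext i (fun i j =>
      if h : (ComplexShape.down ℤ).Rel j i then σ i j ≫ g j else 0) =
      C.d i ((ComplexShape.down ℤ).next i) ≫ σ ((ComplexShape.down ℤ).next i) i ≫ g i := by
    show C.d i ((ComplexShape.down ℤ).next i) ≫ _ = _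
    dsimp only
    rw [dif_pos hrel]
  rw [hprev, hdnext, add_zero]
  set ni := (ComplexShape.down ℤ).next i
  refine ModuleCat.hom_ext (LinearMap.ext fun x => ?_)
  set y := σ ni i (C.d i ni x) with hy
  have hzcyc : C.d i ni (x - y) = 0 := by
    rw [map_sub, hy, hσ, sub_self]
  have hvan := gvanish f rC hrC rD hrD i (x - y) hzcyc
  show (proj D rD hrD).f i (f.f i x) =
    g i (σ ni i (C.d i ni x)) + (homologyComplexMap f).f i ((proj C rC hrC).f i x)
  have hgapp : ∀ w : C.X i, g i w =
      (proj D rD hrD).f i (f.f i w) - (homologyComplexMap f).f i ((proj C rC hrC).f i w) :=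
    fun w => rfl
  rw [← hy, hgapp]
  have hx : x = y + (x - y) := by abel
  calc (proj D rD hrD).f i (f.f i x)
      = (proj D rD hrD).f i (f.f i y) + (proj D rD hrD).f i (f.f i (x - y)) := by
        rw [hx]; simp [map_add]
    _ = (proj D rD hrD).f i (f.f i y) +
        (homologyComplexMap f).f i ((proj C rC hrC).f i (x - y)) := by rw [hvan]
    _ = ((proj D rD hrD).f i (f.f i y) - (homologyComplexMap f).f i ((proj C rC hrC).f i y)) +
        (homologyComplexMap f).f i ((proj C rC hrC).f i x) := by
        rw [hx]; simp [map_add, map_sub]; abel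

end Aux

/-- (Formality of morphisms of chain complexes over a field.)
For any chain map `f : C ⟶ D` of complexes of `K`-vector spaces there are chain maps
`p_C : C ⟶ H(C)` and `p_D : D ⟶ H(D)`, each a quasi-isomorphism inducing the identity on
homology, together with a chain homotopy between `p_D ∘ f` and `H(f) ∘ p_C`. -/
theorem stmt_10 {K : Type} [Field K]
    (C D : ChainComplex (ModuleCat K) ℤ) (f : C ⟶ D) :
    ∃ (pC : C ⟶ homologyComplex C) (pD : D ⟶ homologyComplex D),
      QuasiIso pC ∧ QuasiIso pD ∧
      (∀ n : ℤ, HomologicalComplex.homologyMap pC n ≫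
          (zeroDiffIso (homologyComplex C) (fun _ _ => rfl) n).hom = 𝟙 (C.homology n)) ∧
      (∀ n : ℤ, HomologicalComplex.homologyMap pD n ≫
          (zeroDiffIso (homologyComplex D) (fun _ _ => rfl) n).hom = 𝟙 (D.homology n)) ∧
      Nonempty (Homotopy (f ≫ pD) (pC ≫ homologyComplexMap f)) := by
  choose rC hrC using fun n => exists_retraction C n
  choose rD hrD using fun n => exists_retraction D n
  refine ⟨proj C rC hrC, proj D rD hrD, proj_qis C rC hrC, proj_qis D rD hrD,
    proj_id C rC hrC, proj_id D rD hrD, ⟨theHomotopy f rC hrC rD hrD⟩⟩
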